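/- Let S = ⟨g₁, …, g_{n−k}⟩ be a subgroup of the n-qubit Pauli group G_n generated by n−k independent, mutually commuting elements, and suppose −I ∉ S. Then the joint fixed subspace V_S = { v ∈ ℂ^{2^n} : s v = v for all s ∈ S } is a vector subspace of dimension 2^k. -/

import Mathlib

open scoped Matrix

noncomputable section

/-- The four Pauli matrices `I, σx, σy, σz` as `2 × 2` complex matrices. -/
def pauliMatrix : Fin 4 → Matrix (Fin 2) (Fin 2) ℂ :=
  ![1, !![0, 1; 1, 0], !![0, -Complex.I; Complex.I, 0], !![1, 0; 0, -1]]

/-- The `n`-fold tensor (Kronecker) product of `2 × 2` matrices, as a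
`2^n × 2^n` matrix indexed by `Fin n → Fin 2`. -/
def nTensor (n : ℕ) (f : Fin n → Matrix (Fin 2) (Fin 2) ℂ) :
    Matrix (Fin n → Fin 2) (Fin n → Fin 2) ℂ :=
  fun x y => ∏ i, f i (x i) (y i)

/-- Membership in the `n`-qubit Pauli group: a prefactor `±1, ±i` times an
`n`-fold tensor product of Pauli matrices. -/
def IsPauliGroupElem (n : ℕ) (A : Matrix (Fin n → Fin 2) (Fin n → Fin 2) ℂ) : Prop :=
  ∃ α : ℂ, (α = 1 ∨ α = -1 ∨ α = Complex.I ∨ α = -Complex.I) ∧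
    ∃ p : Fin n → Fin 4, A = α • nTensor n fun i => pauliMatrix (p i)

/-- The joint fixed subspace `V_S = {v | s v = v for all s ∈ S}` of a set `S` of matrices. -/
def fixedSubspace (n : ℕ) (S : Set (Matrix (Fin n → Fin 2) (Fin n → Fin 2) ℂ)) :
    Submodule ℂ ((Fin n → Fin 2) → ℂ) where
  carrier := {v | ∀ s ∈ S, s.mulVec v = v}
  add_mem' := by
    intro a b ha hb s hs
    rw [Matrix.mulVec_add, ha s hs, hb s hs]
  zero_mem' := by
    intro s hs
    rw [Matrix.mulVec_zero]
  smul_mem' := by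
    intro c a ha s hs
    rw [Matrix.mulVec_smul, ha s hs]

/-!
Every element of the Pauli group squares to `±I`, so `−I ∉ S` makes `S` an elementary abelian
2-group, of order `2^(n−k)` since its generators are independent. A Pauli element with nonzero
trace is a scalar, and the only scalar in `S` is `I`. Averaging over `S` is a projection onto
`V_S`, so `dim V_S = |S|⁻¹ ∑ₛ tr s = 2^n / 2^(n−k)`.
-/

open Matrix Complex Module

theorem Complex.pow_four_eq_one_iff (α : ℂ) : α ^ 4 = 1 ↔ α = 1 ∨ α = -1 ∨ α = I ∨ α = -I := by
  have h : α ^ 4 - 1 = (α - 1) * (α + 1) * (α - I) * (α + I) := by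
    ring_nf; rw [I_sq]; ring
  rw [← sub_eq_zero, h]
  simp only [mul_eq_zero, sub_eq_zero, add_eq_zero_iff_eq_neg, or_assoc]

namespace Subgroup

variable {G : Type*} [Group G]

theorem disjoint_zpowers_of_prime_orderOf {x : G} {K : Subgroup G} (hx : (orderOf x).Prime)
    (hxK : x ∉ K) : Disjoint (zpowers x) K := by
  have : Fact (Nat.card (zpowers x)).Prime := ⟨by rwa [Nat.card_zpowers]⟩
  rcases (K.subgroupOf (zpowers x)).eq_bot_or_eq_top_of_prime_card with h | h
  · exact (subgroupOf_eq_bot.1 h).symm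
  · exact absurd (subgroupOf_eq_top.1 h (mem_zpowers x)) hxK

theorem closure_range_eq_iSup_zpowers {ι : Type*} (g : ι → G) :
    closure (Set.range g) = ⨆ i, zpowers (g i) := by
  simp_rw [← Set.iUnion_singleton_eq_range, closure_iUnion, zpowers_eq_closure]

theorem card_closure_range_eq_two_pow {ι : Type*} [Fintype ι] (g : ι → G)
    (hsq : ∀ i, g i ^ 2 = 1) (hcomm : Pairwise fun i j => Commute (g i) (g j))
    (hindep : ∀ i, closure (Set.range fun j : {j : ι // j ≠ i} => g j) < closure (Set.range g)) :
    Nat.card (closure (Set.range g)) = 2 ^ Fintype.card ι := by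
  have hnot : ∀ i, g i ∉ ⨆ (j) (_ : j ≠ i), zpowers (g j) := by
    intro i hi
    rw [iSup_subtype', ← closure_range_eq_iSup_zpowers] at hi
    refine (hindep i).not_ge (closure_le _ |>.2 ?_)
    rintro - ⟨j, rfl⟩
    by_cases hj : j = i
    · exact hj ▸ hi
    · exact subset_closure ⟨⟨j, hj⟩, rfl⟩
  have hord : ∀ i, orderOf (g i) = 2 := fun i =>
    orderOf_eq_prime (hsq i) fun h => hnot i (h ▸ one_mem _)
  have hindep' : iSupIndep fun i => zpowers (g i) := iSupIndep_def.2 fun i =>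
    disjoint_zpowers_of_prime_orderOf (hord i ▸ Nat.prime_two) (hnot i)
  have hcomm' :
      Pairwise fun i j => ∀ x y, x ∈ zpowers (g i) → y ∈ zpowers (g j) → Commute x y := by
    rintro i j hij - - ⟨a, rfl⟩ ⟨b, rfl⟩
    exact (hcomm hij).zpow_zpow a b
  have hinj := injective_noncommPiCoprod_of_iSupIndep (hcomm := hcomm') hindep'
  rw [closure_range_eq_iSup_zpowers, ← noncommPiCoprod_range (hcomm := hcomm'),
    ← Nat.card_congr (MonoidHom.ofInjective hinj).toEquiv, Nat.card_pi]
  simp [Nat.card_zpowers, hord]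

end Subgroup

theorem Representation.average_trace_eq_finrank_invariants {k G V : Type*} [Field k] [Group G]
    [Fintype G] [AddCommGroup V] [Module k V] [FiniteDimensional k V] (ρ : Representation k G V)
    [Invertible (Fintype.card G : k)] :
    ⅟(Fintype.card G : k) * ∑ g : G, LinearMap.trace k V (ρ g) = finrank k ρ.invariants := by
  rw [← ρ.isProj_averageMap.trace]
  simp [GroupAlgebra.average, map_sum, Finset.mul_sum]

theorem pauliMatrix_zero : pauliMatrix 0 = 1 := rfl

theorem pauliMatrix_mul_self (p : Fin 4) : pauliMatrix p * pauliMatrix p = 1 := by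
  fin_cases p <;> ext i j <;> fin_cases i <;> fin_cases j <;>
    simp [pauliMatrix, Matrix.mul_apply, Fin.sum_univ_two]

theorem pauliMatrix_conjTranspose (p : Fin 4) : (pauliMatrix p)ᴴ = pauliMatrix p := by
  fin_cases p <;> ext i j <;> fin_cases i <;> fin_cases j <;> simp [pauliMatrix]

theorem trace_pauliMatrix_of_ne_zero {p : Fin 4} (hp : p ≠ 0) : (pauliMatrix p).trace = 0 := by
  fin_cases p <;> simp_all [pauliMatrix, Matrix.trace, Fin.sum_univ_two]

-- Up to phase, `σx, σy, σz` (indices `1, 2, 3`) multiply like the Klein four-group.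
theorem pauliMatrix_mul (p q : Fin 4) :
    ∃ β : ℂ, β ^ 4 = 1 ∧ pauliMatrix p * pauliMatrix q = β • pauliMatrix (p ^^^ q) := by
  have hnegI : (-I) ^ 4 = 1 := by rw [neg_pow, I_pow_four]; norm_num
  fin_cases p <;> fin_cases q <;>
    first
    | refine ⟨1, one_pow 4, ?_⟩
      ext i j; fin_cases i <;> fin_cases j <;> simp [pauliMatrix, mul_apply, Fin.sum_univ_two]; done
    | refine ⟨I, I_pow_four, ?_⟩
      ext i j; fin_cases i <;> fin_cases j <;> simp [pauliMatrix, mul_apply, Fin.sum_univ_two]; done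
    | refine ⟨-I, hnegI, ?_⟩
      ext i j; fin_cases i <;> fin_cases j <;> simp [pauliMatrix, mul_apply, Fin.sum_univ_two]

section nTensor

variable {n : ℕ}

theorem nTensor_mul (f g : Fin n → Matrix (Fin 2) (Fin 2) ℂ) :
    nTensor n f * nTensor n g = nTensor n (fun i => f i * g i) := by
  ext x y
  simp only [nTensor, mul_apply, ← Finset.prod_mul_distrib]
  rw [Finset.prod_univ_sum]
  simp [Fintype.piFinset_univ]

theorem nTensor_one : nTensor n (fun _ => 1) = 1 := by
  ext x y
  by_cases h : x = y
  · subst h; simp [nTensor]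
  · obtain ⟨i, hi⟩ := Function.ne_iff.mp h
    simp [nTensor, one_apply, h, Finset.prod_eq_zero (Finset.mem_univ i), hi]

theorem nTensor_smul (c : Fin n → ℂ) (f : Fin n → Matrix (Fin 2) (Fin 2) ℂ) :
    nTensor n (fun i => c i • f i) = (∏ i, c i) • nTensor n f := by
  ext x y
  simp [nTensor, Finset.prod_mul_distrib]

theorem conjTranspose_nTensor (f : Fin n → Matrix (Fin 2) (Fin 2) ℂ) :
    (nTensor n f)ᴴ = nTensor n (fun i => (f i)ᴴ) := by
  ext x y
  simp [nTensor]

theorem trace_nTensor (f : Fin n → Matrix (Fin 2) (Fin 2) ℂ) :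
    (nTensor n f).trace = ∏ i, (f i).trace := by
  simp only [trace, diag, nTensor]
  rw [Finset.prod_univ_sum]
  simp [Fintype.piFinset_univ]

end nTensor

theorem isPauliGroupElem_iff {n : ℕ} {A : Matrix (Fin n → Fin 2) (Fin n → Fin 2) ℂ} :
    IsPauliGroupElem n A ↔
      ∃ α : ℂ, α ^ 4 = 1 ∧ ∃ p : Fin n → Fin 4, A = α • nTensor n fun i => pauliMatrix (p i) := by
  simp only [IsPauliGroupElem, pow_four_eq_one_iff]

namespace IsPauliGroupElem

variable {n : ℕ} {A B : Matrix (Fin n → Fin 2) (Fin n → Fin 2) ℂ}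

theorem one : IsPauliGroupElem n 1 :=
  isPauliGroupElem_iff.2 ⟨1, one_pow 4, 0, by simp [pauliMatrix_zero, nTensor_one]⟩

theorem mul (hA : IsPauliGroupElem n A) (hB : IsPauliGroupElem n B) :
    IsPauliGroupElem n (A * B) := by
  obtain ⟨α, hα, p, rfl⟩ := isPauliGroupElem_iff.1 hA
  obtain ⟨β, hβ, q, rfl⟩ := isPauliGroupElem_iff.1 hB
  choose γ hγ hpq using fun i => pauliMatrix_mul (p i) (q i)
  refine isPauliGroupElem_iff.2 ⟨α * β * ∏ i, γ i, ?_, fun i => p i ^^^ q i, ?_⟩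
  · simp [mul_pow, ← Finset.prod_pow, hα, hβ, hγ]
  · rw [smul_mul_smul, nTensor_mul, funext hpq, nTensor_smul, smul_smul]

theorem conjTranspose (hA : IsPauliGroupElem n A) : IsPauliGroupElem n Aᴴ := by
  obtain ⟨α, hα, p, rfl⟩ := isPauliGroupElem_iff.1 hA
  refine isPauliGroupElem_iff.2 ⟨star α, by rw [← star_pow, hα, star_one], p, ?_⟩
  simp [conjTranspose_nTensor, pauliMatrix_conjTranspose]

theorem mul_self (hA : IsPauliGroupElem n A) : A * A = 1 ∨ A * A = -1 := by
  obtain ⟨α, hα, p, rfl⟩ := isPauliGroupElem_iff.1 hA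
  have hsq : α * α * (α * α) = 1 := by rw [← hα]; ring
  rw [smul_mul_smul, nTensor_mul, funext fun i => pauliMatrix_mul_self (p i), nTensor_one]
  rcases mul_self_eq_one_iff.1 hsq with h | h <;> simp [h]

theorem trace_eq_zero (hA : IsPauliGroupElem n A) (hsq : A * A = 1) (h1 : A ≠ 1)
    (hneg : A ≠ -1) : A.trace = 0 := by
  obtain ⟨α, hα, p, rfl⟩ := isPauliGroupElem_iff.1 hA
  by_cases hp : ∀ i, p i = 0
  · have hA1 : (α • nTensor n fun i => pauliMatrix (p i)) = α • 1 := by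
      simp only [hp, pauliMatrix_zero, nTensor_one]
    rw [hA1, smul_mul_smul, mul_one] at hsq
    have hα2 : α * α = 1 := by simpa using congrFun₂ hsq 0 0
    rcases mul_self_eq_one_iff.1 hα2 with rfl | rfl
    · exact absurd (by rw [hA1, one_smul]) h1
    · exact absurd (by rw [hA1, neg_one_smul]) hneg
  · push Not at hp
    obtain ⟨i, hi⟩ := hp
    rw [trace_smul, trace_nTensor,
      Finset.prod_eq_zero (Finset.mem_univ i) (trace_pauliMatrix_of_ne_zero hi), smul_zero]

end IsPauliGroupElem

def pauliGroup (n : ℕ) : Subgroup (unitaryGroup (Fin n → Fin 2) ℂ) where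
  carrier := {u | IsPauliGroupElem n u}
  mul_mem' := IsPauliGroupElem.mul
  one_mem' := IsPauliGroupElem.one
  inv_mem' := IsPauliGroupElem.conjTranspose

theorem finrank_fixedSubspace_mul_card {n : ℕ} (S : Subgroup (unitaryGroup (Fin n → Fin 2) ℂ))
    [Finite S]
    (htrace : ∀ s ∈ S, s ≠ 1 → (s : Matrix (Fin n → Fin 2) (Fin n → Fin 2) ℂ).trace = 0) :
    finrank ℂ (fixedSubspace n (Subtype.val '' (S : Set (unitaryGroup (Fin n → Fin 2) ℂ)))) *
      Nat.card S = 2 ^ n := by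
  have := Fintype.ofFinite S
  let ρ : Representation ℂ S ((Fin n → Fin 2) → ℂ) :=
    toLinAlgEquiv'.toRingEquiv.toMonoidHom.comp ((unitaryGroup _ ℂ).subtype.comp S.subtype)
  have hfix : fixedSubspace n (Subtype.val '' (S : Set (unitaryGroup (Fin n → Fin 2) ℂ))) =
      ρ.invariants := by
    ext v
    simp [fixedSubspace, ρ, Representation.mem_invariants]
  have hρ (s : S) :
      LinearMap.trace ℂ _ (ρ s) = (s : Matrix (Fin n → Fin 2) (Fin n → Fin 2) ℂ).trace :=
    trace_toLin'_eq _
  have hsum : ∑ s : S, LinearMap.trace ℂ _ (ρ s) = 2 ^ n := by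
    simp only [hρ]
    rw [Finset.sum_eq_single 1 (fun s _ hs => htrace _ s.2 (by simpa using hs))
      (fun h => absurd (Finset.mem_univ _) h)]
    simp
  have : Invertible (Fintype.card S : ℂ) :=
    invertibleOfNonzero (Nat.cast_ne_zero.2 Fintype.card_ne_zero)
  have key := Representation.average_trace_eq_finrank_invariants ρ
  rw [hsum, ← hfix] at key
  apply Nat.cast_injective (R := ℂ)
  rw [Nat.card_eq_fintype_card]
  push_cast
  rw [← key, mul_comm, mul_invOf_cancel_left]

/-- If `S = ⟨g₁, …, g_{n−k}⟩` is generated by `n − k` independent commuting elements of the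
`n`-qubit Pauli group and `−I ∉ S`, then the joint fixed subspace `V_S` has dimension `2^k`. -/
theorem stmt0 (n k : ℕ) (hk : k ≤ n)
    (g : Fin (n - k) → Matrix.unitaryGroup (Fin n → Fin 2) ℂ)
    (hpauli : ∀ i, IsPauliGroupElem n (g i))
    (hcomm : ∀ i j, g i * g j = g j * g i)
    (hindep : ∀ i : Fin (n - k),
      Subgroup.closure (Set.range fun j : {j : Fin (n - k) // j ≠ i} => g j)
        < Subgroup.closure (Set.range g))
    (S : Subgroup (Matrix.unitaryGroup (Fin n → Fin 2) ℂ))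
    (hS : S = Subgroup.closure (Set.range g))
    (hnegI : ∀ s ∈ S, (s : Matrix (Fin n → Fin 2) (Fin n → Fin 2) ℂ) ≠ -1) :
    Module.finrank ℂ
      (fixedSubspace n
        ((fun u : Matrix.unitaryGroup (Fin n → Fin 2) ℂ =>
          (u : Matrix (Fin n → Fin 2) (Fin n → Fin 2) ℂ)) '' (S : Set _))) = 2 ^ k := by
  have hSP : S ≤ pauliGroup n := hS ▸ (Subgroup.closure_le _).2 (Set.range_subset_iff.2 hpauli)
  have hsq (s) (hs : s ∈ S) : (s : Matrix (Fin n → Fin 2) (Fin n → Fin 2) ℂ) * s = 1 :=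
    (IsPauliGroupElem.mul_self (hSP hs)).resolve_right (hnegI _ (mul_mem hs hs))
  have hcard : Nat.card S = 2 ^ (n - k) := by
    subst hS
    simpa using Subgroup.card_closure_range_eq_two_pow g
      (fun i => by rw [sq]; exact Subtype.ext (hsq _ (Subgroup.subset_closure ⟨i, rfl⟩)))
      (fun i j _ => hcomm i j) hindep
  have : Finite S := Nat.finite_of_card_ne_zero (by simp [hcard])
  have key := finrank_fixedSubspace_mul_card S fun s hs h1 =>
    IsPauliGroupElem.trace_eq_zero (hSP hs) (hsq s hs) (fun h => h1 (Subtype.ext h)) (hnegI s hs)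
  rw [hcard, ← pow_mul_pow_sub 2 hk] at key
  exact Nat.eq_of_mul_eq_mul_right (by positivity) key
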